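/- The softmax map from ℝ^d to the probability simplex is 1-Lipschitz with respect to the Euclidean norm: for all u, v ∈ ℝ^d, ‖softmax(u) − softmax(v)‖₂ ≤ ‖u − v‖₂. -/

import Mathlib

/-!
Put `w = u - v`, `e = softmax u - softmax v` and `φ t = ⟪softmax (v + t • w), e⟫`, so that
`φ 1 - φ 0 = ‖e‖²`. The derivative of `φ` is `⟪J w, e⟫`, where `J = diag p - p pᵀ` is the Jacobian
of softmax at a point where it takes the value `p`. Since `p` is a probability vector,
`‖J w‖ ≤ ‖w‖`, so the mean value theorem gives `‖e‖² ≤ ‖w‖ ‖e‖`.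
-/

open Finset Real

noncomputable def softmax {d : ℕ} (u : Fin d → ℝ) : Fin d → ℝ :=
  fun i => Real.exp (u i) / ∑ j, Real.exp (u j)

lemma softmax_nonneg {d : ℕ} (u : Fin d → ℝ) (i : Fin d) : 0 ≤ softmax u i :=
  div_nonneg (exp_pos _).le (sum_nonneg fun _ _ => (exp_pos _).le)

lemma sum_softmax_le_one {d : ℕ} (u : Fin d → ℝ) : ∑ i, softmax u i ≤ 1 := by
  simp only [softmax, ← sum_div]
  exact div_self_le_one _

lemma sum_sq_mul_sub_sum_mul_le_sum_sq {ι : Type*} [Fintype ι] (p w : ι → ℝ)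
    (hp : ∀ i, 0 ≤ p i) (hp_sum : ∑ i, p i ≤ 1) :
    ∑ i, (p i * (w i - ∑ j, p j * w j)) ^ 2 ≤ ∑ i, w i ^ 2 := by
  set c := ∑ j, p j * w j
  have hp_le : ∀ i, p i ≤ 1 := fun i =>
    (single_le_sum (fun j _ => hp j) (mem_univ i)).trans hp_sum
  have h_variance : ∑ i, p i * (w i - c) ^ 2 = ∑ i, p i * w i ^ 2 - (2 - ∑ i, p i) * c ^ 2 := by
    have h_expand : ∀ i, p i * (w i - c) ^ 2 = p i * w i ^ 2 - 2 * c * (p i * w i) + c ^ 2 * p i :=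
      fun i => by ring
    simp only [h_expand, sum_add_distrib, sum_sub_distrib, ← mul_sum]
    ring
  calc ∑ i, (p i * (w i - c)) ^ 2
      ≤ ∑ i, p i * (w i - c) ^ 2 := by
        gcongr with i
        nlinarith [mul_nonneg (mul_nonneg (hp i) (sub_nonneg.2 (hp_le i))) (sq_nonneg (w i - c))]
    _ ≤ ∑ i, p i * w i ^ 2 := by
        rw [h_variance]
        nlinarith [sq_nonneg c]
    _ ≤ ∑ i, w i ^ 2 := by
        gcongr with i
        nlinarith [hp_le i, sq_nonneg (w i)]

lemma hasDerivAt_softmax {d : ℕ} {f : ℝ → Fin d → ℝ} {f' : Fin d → ℝ} {t : ℝ}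
    (hf : ∀ j, HasDerivAt (fun s => f s j) (f' j) t) (i : Fin d) :
    HasDerivAt (fun s => softmax (f s) i)
      (softmax (f t) i * (f' i - ∑ j, softmax (f t) j * f' j)) t := by
  have hS : ∑ j, exp (f t j) ≠ 0 := (sum_pos (fun j _ => exp_pos _) ⟨i, mem_univ i⟩).ne'
  refine ((hf i).exp.div (HasDerivAt.fun_sum fun j _ => (hf j).exp) hS).congr_deriv ?_
  simp only [softmax, ← sum_div, div_mul_eq_mul_div]
  field_simp

lemma sum_softmax_jacobian_mul_le {d : ℕ} (u w e : Fin d → ℝ) :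
    ∑ i, softmax u i * (w i - ∑ j, softmax u j * w j) * e i
      ≤ √(∑ i, w i ^ 2) * √(∑ i, e i ^ 2) :=
  (sum_mul_le_sqrt_mul_sqrt _ _ _).trans <| mul_le_mul_of_nonneg_right
    (sqrt_le_sqrt <| sum_sq_mul_sub_sum_mul_le_sum_sq _ w (softmax_nonneg u) (sum_softmax_le_one u))
    (sqrt_nonneg _)

theorem softmax_one_lipschitz_l2 {d : ℕ} (u v : Fin d → ℝ) :
    Real.sqrt (∑ i, (softmax u i - softmax v i) ^ 2)
      ≤ Real.sqrt (∑ i, (u i - v i) ^ 2) := by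
  set e := fun i => softmax u i - softmax v i
  set w := fun i => u i - v i
  let γ : ℝ → Fin d → ℝ := fun t j => v j + t * w j
  let φ : ℝ → ℝ := fun t => ∑ i, softmax (γ t) i * e i
  have hγ : ∀ t j, HasDerivAt (fun s => γ s j) (w j) t := fun t j =>
    (((hasDerivAt_id t).mul_const (w j)).const_add (v j)).congr_deriv (one_mul _)
  have hφ : ∀ t, HasDerivAt φ
      (∑ i, softmax (γ t) i * (w i - ∑ j, softmax (γ t) j * w j) * e i) t := fun t =>
    HasDerivAt.fun_sum fun i _ => (hasDerivAt_softmax (hγ t) i).mul_const (e i)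
  have hφ_sub : φ 1 - φ 0 = ∑ i, e i ^ 2 := by
    simp only [φ, γ, w, zero_mul, add_zero, one_mul, add_sub_cancel, ← sum_sub_distrib]
    exact sum_congr rfl fun i _ => by ring
  have h_mvt : φ 1 - φ 0 ≤ √(∑ i, w i ^ 2) * √(∑ i, e i ^ 2) := by
    simpa using image_sub_le_mul_sub_of_deriv_le (fun t => (hφ t).differentiableAt)
      (fun t => (hφ t).deriv ▸ sum_softmax_jacobian_mul_le (γ t) w e) zero_le_one
  have h_sq : √(∑ i, e i ^ 2) ^ 2 ≤ √(∑ i, w i ^ 2) * √(∑ i, e i ^ 2) := by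
    rw [sq_sqrt (sum_nonneg fun _ _ => sq_nonneg _)]
    exact hφ_sub.symm.trans_le h_mvt
  nlinarith [sqrt_nonneg (∑ i, e i ^ 2), sqrt_nonneg (∑ i, w i ^ 2)]
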